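/- Define Ω : (0,∞) → R implicitly by the equation 1/x = Σ_{k=1}^∞ e^{−k²π (x/Ω(x))²}. Then Ω(x) > 2 for all x > 0, lim_{x→0+} Ω(x) = 2, and Ω is a surjection onto (2,∞). -/

import Mathlib

/-!
With `T = thetaTail`, the equation says `T (x / Ω x) = 1 / x`.
Since `t ↦ e^{-π s² t²}` decreases on `[0, ∞)` and integrates to `1 / (2 s)` there, the integral
test gives `1 / (2 s) - 1 ≤ T s < 1 / (2 s)`, i.e. `2 < Ω x ≤ 2 + 2 x`.
For `c > 2`, an `s > 0` with `s T s = 1 / c` exists by the intermediate value theorem, because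
`s T s ≥ 1/2 - s` while `s T s ≤ π / (6 s)` by `e^{-y} ≤ 1 / y` and `ζ(2) = π² / 6`;
as `T` is injective, `Ω (c s) = c`.
-/

open Real Set Filter MeasureTheory Topology

noncomputable def thetaTail (s : ℝ) : ℝ := ∑' k : ℕ, exp (-((k : ℝ) + 1) ^ 2 * π * s ^ 2)

theorem AntitoneOn.tsum_add_one_lt_integral {f : ℝ → ℝ} (anti : AntitoneOn f (Ici 0))
    (integrable : IntegrableOn f (Ioi 0)) (nonneg : ∀ t ∈ Ioi 0, 0 ≤ f t)
    (cont : ContinuousOn f (Icc 0 1)) (hf : f 1 < f 0) :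
    ∑' n : ℕ, f (n + 1 : ℕ) < ∫ t in Ioi 0, f t := by
  have summable :=
    (summable_nat_add_iff 1).2 (anti.summable_of_integrableOn_Ioi_zero integrable nonneg)
  have tail : ∑' n : ℕ, f (n + 1 + 1 : ℕ) ≤ ∫ t in Ioi 1, f t := by
    have h1 : Ioi ((1 : ℕ) : ℝ) ⊆ Ioi 0 := Ioi_subset_Ioi (by norm_num)
    simpa using AntitoneOn.tsum_comp_add_le_integral 1 (anti.mono (Ici_subset_Ici.2 (by norm_num)))
      (integrable.mono_set h1) fun t ht => nonneg t (h1 ht)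
  have head : f 1 < ∫ t in (0 : ℝ)..1, f t := by
    simpa using intervalIntegral.integral_lt_integral_of_continuousOn_of_le_of_exists_lt
      zero_lt_one continuousOn_const cont
      (fun t ht => anti (mem_Ici.2 ht.1.le) (mem_Ici.2 zero_le_one) ht.2)
      ⟨0, left_mem_Icc.2 zero_le_one, hf⟩
  have split : ∫ t in Ioi 0, f t = (∫ t in (0 : ℝ)..1, f t) + ∫ t in Ioi 1, f t := by
    rw [intervalIntegral.integral_of_le zero_le_one, ← setIntegral_union (Ioc_disjoint_Ioi le_rfl)
      measurableSet_Ioi (integrable.mono_set Ioc_subset_Ioi_self)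
      (integrable.mono_set (Ioi_subset_Ioi zero_le_one)), Ioc_union_Ioi_eq_Ioi zero_le_one]
  rw [summable.tsum_eq_zero_add, split]
  push_cast at tail ⊢
  linarith

lemma antitoneOn_exp_neg_mul_sq {b : ℝ} (hb : 0 ≤ b) :
    AntitoneOn (fun t : ℝ => exp (-b * t ^ 2)) (Ici 0) := by
  intro u hu v _ huv
  simp only [exp_le_exp, neg_mul, neg_le_neg_iff]
  gcongr

lemma thetaTail_eq_tsum (s : ℝ) :
    thetaTail s = ∑' n : ℕ, exp (-(π * s ^ 2) * ((n + 1 : ℕ) : ℝ) ^ 2) := by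
  unfold thetaTail
  congr 1 with n
  push_cast
  ring_nf

lemma integral_exp_neg_pi_mul_sq_mul_sq {s : ℝ} (hs : 0 < s) :
    ∫ t in Ioi 0, exp (-(π * s ^ 2) * t ^ 2) = 1 / (2 * s) := by
  rw [integral_gaussian_Ioi, show π / (π * s ^ 2) = (1 / s) ^ 2 by field_simp,
    sqrt_sq (by positivity)]
  ring

lemma thetaTail_lt {s : ℝ} (hs : 0 < s) : thetaTail s < 1 / (2 * s) := by
  have hb : 0 < π * s ^ 2 := by positivity
  rw [thetaTail_eq_tsum, ← integral_exp_neg_pi_mul_sq_mul_sq hs]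
  refine (antitoneOn_exp_neg_mul_sq hb.le).tsum_add_one_lt_integral
    (integrable_exp_neg_mul_sq hb).integrableOn (fun t _ => (exp_pos _).le) (by fun_prop) ?_
  simpa using hb

lemma one_div_two_mul_sub_one_le_thetaTail {s : ℝ} (hs : 0 < s) :
    1 / (2 * s) - 1 ≤ thetaTail s := by
  have hb : 0 < π * s ^ 2 := by positivity
  have anti := antitoneOn_exp_neg_mul_sq hb.le
  have integrable := (integrable_exp_neg_mul_sq hb).integrableOn (s := Ioi 0)
  have nonneg : ∀ t ∈ Ioi (0 : ℝ), 0 ≤ exp (-(π * s ^ 2) * t ^ 2) := fun t _ => (exp_pos _).le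
  have summable := anti.summable_of_integrableOn_Ioi_zero integrable nonneg
  have := anti.integral_le_tsum summable nonneg
  rw [integral_exp_neg_pi_mul_sq_mul_sq hs, summable.tsum_eq_zero_add] at this
  rw [thetaTail_eq_tsum]
  rw [Nat.cast_zero, zero_pow two_ne_zero, mul_zero, exp_zero] at this
  linarith

lemma exp_neg_le_one_div {y : ℝ} (hy : 0 < y) : exp (-y) ≤ 1 / y := by
  rw [exp_neg, inv_eq_one_div]
  exact one_div_le_one_div_of_le hy (by linarith [add_one_le_exp y])

lemma hasSum_one_div_nat_add_one_sq :
    HasSum (fun k : ℕ => 1 / ((k : ℝ) + 1) ^ 2) (π ^ 2 / 6) := by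
  simpa using (hasSum_nat_add_iff' 1).2 hasSum_zeta_two

lemma exp_neg_succ_sq_mul_pi_mul_sq_le {a s : ℝ} (ha : 0 < a) (has : a ≤ s) (k : ℕ) :
    exp (-((k : ℝ) + 1) ^ 2 * π * s ^ 2) ≤ 1 / (π * a ^ 2) * (1 / ((k : ℝ) + 1) ^ 2) :=
  calc exp (-((k : ℝ) + 1) ^ 2 * π * s ^ 2) ≤ exp (-(((k : ℝ) + 1) ^ 2 * π * a ^ 2)) := by
        simp only [exp_le_exp, neg_mul, neg_le_neg_iff]
        gcongr
    _ ≤ 1 / (((k : ℝ) + 1) ^ 2 * π * a ^ 2) := exp_neg_le_one_div (by positivity)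
    _ = 1 / (π * a ^ 2) * (1 / ((k : ℝ) + 1) ^ 2) := by field_simp

lemma summable_exp_neg_succ_sq_mul_pi_mul_sq {s : ℝ} (hs : 0 < s) :
    Summable fun k : ℕ => exp (-((k : ℝ) + 1) ^ 2 * π * s ^ 2) :=
  .of_nonneg_of_le (fun _ => (exp_pos _).le) (exp_neg_succ_sq_mul_pi_mul_sq_le hs le_rfl)
    (hasSum_one_div_nat_add_one_sq.summable.mul_left _)

lemma thetaTail_le {s : ℝ} (hs : 0 < s) : thetaTail s ≤ π / (6 * s ^ 2) :=
  calc thetaTail s ≤ ∑' k : ℕ, 1 / (π * s ^ 2) * (1 / ((k : ℝ) + 1) ^ 2) :=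
        (summable_exp_neg_succ_sq_mul_pi_mul_sq hs).tsum_le_tsum
          (exp_neg_succ_sq_mul_pi_mul_sq_le hs le_rfl) (hasSum_one_div_nat_add_one_sq.summable.mul_left _)
    _ = π / (6 * s ^ 2) := by
        rw [tsum_mul_left, hasSum_one_div_nat_add_one_sq.tsum_eq]
        field_simp

lemma thetaTail_strictAntiOn : StrictAntiOn thetaTail (Ioi 0) := by
  intro s hs t _ hst
  refine Summable.tsum_lt_tsum (i := 0) (fun k => ?_) ?_
    (summable_exp_neg_succ_sq_mul_pi_mul_sq (hs.out.trans hst))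
    (summable_exp_neg_succ_sq_mul_pi_mul_sq hs)
  all_goals
    simp only [exp_le_exp, exp_lt_exp, neg_mul, neg_le_neg_iff, neg_lt_neg_iff]
    gcongr
    exact hs.out.le

lemma continuousOn_thetaTail : ContinuousOn thetaTail (Ioi 0) := by
  intro s hs
  have hs2 : 0 < s / 2 := half_pos hs
  have : ContinuousOn thetaTail (Ioi (s / 2)) :=
    continuousOn_tsum (fun k => by fun_prop) (hasSum_one_div_nat_add_one_sq.summable.mul_left _)
      fun k t ht => by
        rw [norm_of_nonneg (exp_pos _).le]
        exact exp_neg_succ_sq_mul_pi_mul_sq_le hs2 (le_of_lt ht) k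
  exact (this.continuousAt (Ioi_mem_nhds (half_lt_self hs))).continuousWithinAt

lemma exists_mul_thetaTail_eq {y : ℝ} (hy0 : 0 < y) (hy : y < 1 / 2) :
    ∃ s ∈ Ioi (0 : ℝ), s * thetaTail s = y := by
  set a := (1 / 2 - y) / 2 with ha_def
  have ha : 0 < a := by positivity
  have small : y ≤ a * thetaTail a :=
    calc y ≤ a * (1 / (2 * a) - 1) := by field_simp; rw [ha_def]; linarith
      _ ≤ a * thetaTail a := by gcongr; exact one_div_two_mul_sub_one_le_thetaTail ha
  have large : 1 / y * thetaTail (1 / y) ≤ y :=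
    calc 1 / y * thetaTail (1 / y) ≤ 1 / y * (π / (6 * (1 / y) ^ 2)) := by
          gcongr; exact thetaTail_le (by positivity)
      _ = π / 6 * y := by field_simp
      _ ≤ y := by nlinarith [pi_lt_four]
  exact isPreconnected_Ioi.intermediate_value (one_div_pos.2 hy0) ha
    (continuousOn_id.mul continuousOn_thetaTail) ⟨large, small⟩

lemma two_lt_of_one_div_eq_thetaTail {x w : ℝ} (hx : 0 < x) (hw : 0 < w)
    (h : 1 / x = thetaTail (x / w)) : 2 < w := by
  have := thetaTail_lt (div_pos hx hw)
  rw [← h] at this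
  field_simp at this
  linarith

lemma le_two_add_two_mul_of_one_div_eq_thetaTail {x w : ℝ} (hx : 0 < x) (hw : 0 < w)
    (h : 1 / x = thetaTail (x / w)) : w ≤ 2 + 2 * x := by
  have := one_div_two_mul_sub_one_le_thetaTail (div_pos hx hw)
  rw [← h] at this
  field_simp at this
  linarith

/-- Let `Ω : (0,∞) → ℝ` be positive and satisfy the implicit equation
`1/x = ∑_{k=1}^∞ e^{-k²π(x/Ω(x))²}`.  Then `Ω(x) > 2` for all `x > 0`,
`Ω(x) → 2` as `x → 0⁺`, and `Ω` maps `(0,∞)` onto `(2,∞)`. -/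
theorem stmt_10 (Ω : ℝ → ℝ) (hΩpos : ∀ x ∈ Ioi (0 : ℝ), 0 < Ω x)
    (hΩ : ∀ x ∈ Ioi (0 : ℝ),
      1 / x = ∑' k : ℕ, Real.exp (-((k : ℝ) + 1) ^ 2 * π * (x / Ω x) ^ 2)) :
    (∀ x ∈ Ioi (0 : ℝ), 2 < Ω x) ∧
    Tendsto Ω (nhdsWithin 0 (Ioi 0)) (nhds 2) ∧
    Set.SurjOn Ω (Ioi 0) (Ioi 2) := by
  have lower (x) (hx : x ∈ Ioi (0 : ℝ)) : 2 < Ω x :=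
    two_lt_of_one_div_eq_thetaTail hx (hΩpos x hx) (hΩ x hx)
  have upper (x) (hx : x ∈ Ioi (0 : ℝ)) : Ω x ≤ 2 + 2 * x :=
    le_two_add_two_mul_of_one_div_eq_thetaTail hx (hΩpos x hx) (hΩ x hx)
  refine ⟨lower, ?_, fun c (hc : 2 < c) => ?_⟩
  · have affine : Tendsto (fun x : ℝ => 2 + 2 * x) (𝓝[>] 0) (𝓝 2) :=
      ((continuous_const.add (continuous_const.mul continuous_id)).tendsto' 0 2
        (by norm_num)).mono_left nhdsWithin_le_nhds
    exact tendsto_of_tendsto_of_tendsto_of_le_of_le' tendsto_const_nhds affine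
      (eventually_nhdsWithin_of_forall fun x hx => (lower x hx).le)
      (eventually_nhdsWithin_of_forall upper)
  · have hc0 : 0 < c := by linarith
    obtain ⟨s, hs, hsc⟩ := exists_mul_thetaTail_eq (one_div_pos.2 hc0)
      (one_div_lt_one_div_of_lt two_pos hc)
    have hx : c * s ∈ Ioi 0 := mul_pos hc0 hs
    have hsx : thetaTail (c * s / Ω (c * s)) = thetaTail s := by
      rw [show thetaTail (c * s / Ω (c * s)) = 1 / (c * s) from (hΩ _ hx).symm]
      field_simp at hsc
      exact (eq_one_div_of_mul_eq_one_left (by linarith)).symm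
    have hdiv := thetaTail_strictAntiOn.injOn (div_pos hx (hΩpos _ hx)) hs hsx
    rw [div_eq_iff (hΩpos _ hx).ne'] at hdiv
    exact ⟨c * s, hx, mul_right_cancel₀ hs.out.ne' (by linarith)⟩
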